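/- arXiv:2402.19234 — 3 statements merged into one kernel-verified Lean document; each statement's English description precedes it below -/
import Mathlib

section
/- For every integer n ≥ 4, the broadcast independence number of the oriented circulant graph C⃗(n;1,2) equals ⌊n/2⌋, which is its diameter; moreover every independent broadcast of maximum cost has exactly one broadcast vertex. -/
/-- Arc relation of the oriented circulant graph C⃗(n;1,a): arcs u → u+1 and u → u+a (mod n). -/
def circArc (n : ℕ) (a : ℤ) (u v : ZMod n) : Prop :=
  v = u + 1 ∨ v = u + (a : ZMod n)

/-- There is a directed walk of length k from u to v in C⃗(n;1,a). -/
def circSteps (n : ℕ) (a : ℤ) (u v : ZMod n) (k : ℕ) : Prop :=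
  ∃ g : ℕ → ZMod n, g 0 = u ∧ g k = v ∧ ∀ i < k, circArc n a (g i) (g (i + 1))

/-- Directed distance: length of a shortest directed path from u to v. -/
noncomputable def circDist (n : ℕ) (a : ℤ) (u v : ZMod n) : ℕ :=
  sInf {k | circSteps n a u v k}

/-- Eccentricity of a vertex: maximum distance from it to any vertex. -/
noncomputable def circEcc (n : ℕ) (a : ℤ) (u : ZMod n) : ℕ :=
  sSup {d | ∃ v, d = circDist n a u v}

/-- Diameter: maximum eccentricity. -/
noncomputable def circDiam (n : ℕ) (a : ℤ) : ℕ :=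
  sSup {d | ∃ u, d = circEcc n a u}

/-- f is an independent broadcast on C⃗(n;1,a). -/
def IsIndepBroadcast (n : ℕ) (a : ℤ) (f : ZMod n → ℕ) : Prop :=
  (∀ v, f v ≤ circEcc n a v) ∧
  ∀ u v : ZMod n, u ≠ v → 0 < f u → 0 < f v → f u < circDist n a u v

/-- Cost of a broadcast: sum of its values over all vertices. -/
def circCost (n : ℕ) (f : ZMod n → ℕ) : ℕ :=
  ∑ i ∈ Finset.range n, f (i : ZMod n)

/-- The broadcast independence number of C⃗(n;1,a). -/
noncomputable def betaB (n : ℕ) (a : ℤ) : ℕ :=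
  sSup {c | ∃ f : ZMod n → ℕ, IsIndepBroadcast n a f ∧ c = circCost n f}

/-!
Writing `v - u` as a residue `m ∈ [0, n)`, a shortest walk from `u` to `v` uses as many arcs of
length 2 as possible, so `d(u, v) = ⌈m / 2⌉`; hence every vertex has eccentricity `⌊n / 2⌋`,
which a single broadcasting vertex attains. If two or more vertices broadcast, then for each
broadcasting `u` the `2 f(u) + 1` vertices `u, u + 1, …, u + 2 f(u)` lie within distance `f(u)` of
`u`, so these windows are pairwise disjoint. Counting gives `2 · cost + k ≤ n`, where `k ≥ 2` is
the number of broadcasting vertices, so the cost is strictly below `⌊n / 2⌋`.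
-/

open Finset

variable {n : ℕ}

theorem circSteps_two_iff (u v : ZMod n) (k : ℕ) :
    circSteps n 2 u v k ↔ ∃ j ≤ k, v = u + ((k + j : ℕ) : ZMod n) := by
  constructor
  · rintro ⟨g, rfl, rfl, harc⟩
    suffices ∀ i ≤ k, ∃ j ≤ i, g i = g 0 + ((i + j : ℕ) : ZMod n) from this k le_rfl
    intro i hi
    induction i with
    | zero => exact ⟨0, le_rfl, by simp⟩
    | succ i ih =>
      obtain ⟨j, hj, hgi⟩ := ih (by omega)
      rcases harc i (by omega) with h | h
      · exact ⟨j, by omega, by rw [h, hgi]; push_cast; ring⟩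
      · exact ⟨j + 1, by omega, by rw [h, hgi]; push_cast; ring⟩
  · rintro ⟨j, hj, rfl⟩
    -- take arcs of length 2 for the first `j` steps and arcs of length 1 afterwards
    refine ⟨fun i => u + ((i + min i j : ℕ) : ZMod n), by simp, by dsimp only; rw [min_eq_right hj],
      fun i _ => ?_⟩
    dsimp only
    rcases le_or_gt j i with h | h
    · left
      rw [min_eq_right h, min_eq_right (by omega : j ≤ i + 1)]
      push_cast; ring
    · right
      rw [min_eq_left h.le, min_eq_left (h : i + 1 ≤ j)]
      push_cast; ring

theorem circDist_two_eq [NeZero n] (u v : ZMod n) :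
    circDist n 2 u v = ((v - u).val + 1) / 2 := by
  set m := (v - u).val with hm
  have hmem : circSteps n 2 u v ((m + 1) / 2) := by
    refine (circSteps_two_iff u v _).2 ⟨m / 2, by omega, ?_⟩
    rw [show (m + 1) / 2 + m / 2 = m by omega, hm, ZMod.natCast_zmod_val, add_sub_cancel]
  refine le_antisymm (Nat.sInf_le hmem) (le_csInf ⟨_, hmem⟩ fun k hk => ?_)
  obtain ⟨j, hj, rfl⟩ := (circSteps_two_iff u v k).1 hk
  have : m ≤ k + j := by
    rw [hm, add_sub_cancel_left, ZMod.val_natCast]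
    exact Nat.mod_le _ _
  omega

theorem circEcc_two_eq [NeZero n] (u : ZMod n) : circEcc n 2 u = n / 2 := by
  have hn := Nat.pos_of_neZero n
  refine IsGreatest.csSup_eq ⟨⟨u + ((n - 1 : ℕ) : ZMod n), ?_⟩, ?_⟩
  · rw [circDist_two_eq, add_sub_cancel_left, ZMod.val_cast_of_lt (by omega)]
    omega
  · rintro d ⟨v, rfl⟩
    have := ZMod.val_lt (v - u)
    rw [circDist_two_eq]
    omega

theorem circDiam_two_eq [NeZero n] : circDiam n 2 = n / 2 :=
  IsGreatest.csSup_eq ⟨⟨0, (circEcc_two_eq 0).symm⟩, by rintro d ⟨u, rfl⟩; rw [circEcc_two_eq]⟩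

theorem circCost_eq_sum [NeZero n] (f : ZMod n → ℕ) : circCost n f = ∑ v, f v :=
  sum_nbij' (fun i => (i : ZMod n)) ZMod.val (by simp) (fun v _ => mem_range.2 (ZMod.val_lt v))
    (fun i hi => ZMod.val_cast_of_lt (mem_range.1 hi)) (fun v _ => ZMod.natCast_zmod_val v)
    (fun _ _ => rfl)

def circInterval (v : ZMod n) (l : ℕ) : Finset (ZMod n) :=
  (range l).image fun t : ℕ => v + (t : ZMod n)

theorem card_circInterval (v : ZMod n) {l : ℕ} (hl : l ≤ n) : #(circInterval v l) = l := by
  rw [circInterval, card_image_of_injOn, card_range]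
  intro s hs t ht hst
  simp only [coe_range, Set.mem_Iio] at hs ht
  have := (ZMod.natCast_eq_natCast_iff' s t n).1 (add_left_cancel hst)
  rwa [Nat.mod_eq_of_lt (by omega), Nat.mod_eq_of_lt (by omega)] at this

theorem val_sub_le_of_add_eq {u v : ZMod n} {s t : ℕ} (h : u + s = v + t) (hts : t ≤ s) :
    (v - u).val ≤ s := by
  have : v - u = ((s - t : ℕ) : ZMod n) := by
    push_cast [hts]
    linear_combination -h
  rw [this, ZMod.val_natCast]
  exact (Nat.mod_le _ _).trans (Nat.sub_le _ _)

theorem disjoint_circInterval {u v : ZMod n} {l m : ℕ} (hl : l ≤ (v - u).val)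
    (hm : m ≤ (u - v).val) : Disjoint (circInterval u l) (circInterval v m) := by
  simp only [circInterval, disjoint_left, mem_image, mem_range]
  rintro x ⟨s, hs, rfl⟩ ⟨t, ht, hx⟩
  rcases le_total t s with hts | hst
  · have := val_sub_le_of_add_eq hx.symm hts
    omega
  · have := val_sub_le_of_add_eq hx hst
    omega

theorem sum_le_of_le_val_sub [NeZero n] {S : Finset (ZMod n)} (hS : 1 < #S) {l : ZMod n → ℕ}
    (hl : ∀ u ∈ S, ∀ v ∈ S, u ≠ v → l u ≤ (v - u).val) : ∑ u ∈ S, l u ≤ n := by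
  have hcard : ∀ u ∈ S, #(circInterval u (l u)) = l u := fun u hu => by
    obtain ⟨v, hv, hvu⟩ := exists_mem_ne hS u
    exact card_circInterval u ((hl u hu v hv hvu.symm).trans (ZMod.val_lt _).le)
  have hdisj : (S : Set (ZMod n)).PairwiseDisjoint fun u => circInterval u (l u) :=
    fun u hu v hv huv => disjoint_circInterval (hl u hu v hv huv) (hl v hv u hu huv.symm)
  calc ∑ u ∈ S, l u = #(S.biUnion fun u => circInterval u (l u)) := by
        rw [card_biUnion hdisj, sum_congr rfl hcard]
    _ ≤ #(univ : Finset (ZMod n)) := card_le_univ _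
    _ = n := ZMod.card n

def broadcastVertices [NeZero n] (f : ZMod n → ℕ) : Finset (ZMod n) := {v | 0 < f v}

@[simp]
theorem mem_broadcastVertices [NeZero n] {f : ZMod n → ℕ} {v : ZMod n} :
    v ∈ broadcastVertices f ↔ 0 < f v := by
  simp [broadcastVertices]

theorem circCost_eq_sum_broadcastVertices [NeZero n] (f : ZMod n → ℕ) :
    circCost n f = ∑ v ∈ broadcastVertices f, f v := by
  rw [circCost_eq_sum, broadcastVertices, sum_filter_of_ne fun _ _ h => Nat.pos_of_ne_zero h]

namespace IsIndepBroadcast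

variable [NeZero n] {f : ZMod n → ℕ} (hf : IsIndepBroadcast n 2 f)
include hf

theorem two_mul_add_one_le_val_sub {u v : ZMod n} (huv : u ≠ v) (hu : 0 < f u) (hv : 0 < f v) :
    2 * f u + 1 ≤ (v - u).val := by
  have := hf.2 u v huv hu hv
  rw [circDist_two_eq] at this
  omega

theorem circCost_lt (h : 1 < #(broadcastVertices f)) : circCost n f < n / 2 := by
  have hsum : ∑ v ∈ broadcastVertices f, (2 * f v + 1) ≤ n :=
    sum_le_of_le_val_sub h fun u hu v hv huv =>
      hf.two_mul_add_one_le_val_sub huv (mem_broadcastVertices.1 hu) (mem_broadcastVertices.1 hv)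
  rw [sum_add_distrib, ← mul_sum, sum_const, smul_eq_mul, mul_one] at hsum
  rw [circCost_eq_sum_broadcastVertices]
  omega

theorem circCost_le : circCost n f ≤ n / 2 := by
  rcases le_or_gt #(broadcastVertices f) 1 with h | h
  · obtain ⟨a, ha⟩ := card_le_one_iff_subset_singleton.1 h
    calc circCost n f = ∑ v ∈ broadcastVertices f, f v := circCost_eq_sum_broadcastVertices f
      _ ≤ ∑ v ∈ {a}, f v := sum_le_sum_of_subset ha
      _ = f a := sum_singleton f a
      _ ≤ n / 2 := circEcc_two_eq a ▸ hf.1 a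
  · exact (hf.circCost_lt h).le

theorem existsUnique_pos_of_circCost_eq (hn : 2 ≤ n) (hc : circCost n f = n / 2) :
    ∃! v, 0 < f v := by
  have hcard : #(broadcastVertices f) = 1 := by
    rcases lt_trichotomy #(broadcastVertices f) 1 with h | h | h
    · rw [circCost_eq_sum_broadcastVertices, card_eq_zero.1 (Nat.lt_one_iff.1 h), sum_empty] at hc
      omega
    · exact h
    · exact absurd hc (hf.circCost_lt h).ne
  obtain ⟨a, ha⟩ := card_eq_one.1 hcard
  simp_rw [← mem_broadcastVertices, ha, mem_singleton, existsUnique_eq]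

end IsIndepBroadcast

theorem isIndepBroadcast_single [NeZero n] (v : ZMod n) :
    IsIndepBroadcast n 2 (Pi.single v (n / 2) : ZMod n → ℕ) := by
  have hsupp : ∀ w, 0 < (Pi.single v (n / 2) : ZMod n → ℕ) w → w = v := fun w h => by
    by_contra hw
    simp [hw] at h
  refine ⟨fun w => ?_, fun u w huw hu hw => absurd ((hsupp u hu).trans (hsupp w hw).symm) huw⟩
  rw [circEcc_two_eq, Pi.single_apply]
  split_ifs <;> omega

theorem betaB_two_eq [NeZero n] : betaB n 2 = n / 2 :=
  IsGreatest.csSup_eq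
    ⟨⟨_, isIndepBroadcast_single 0, by rw [circCost_eq_sum, sum_pi_single', if_pos (mem_univ _)]⟩,
      by rintro c ⟨f, hf, rfl⟩; exact hf.circCost_le⟩

theorem stmt5 (n : ℕ) (hn : 4 ≤ n) :
    betaB n 2 = n / 2 ∧ circDiam n 2 = n / 2 ∧
    ∀ f : ZMod n → ℕ, IsIndepBroadcast n 2 f → circCost n f = betaB n 2 →
      ∃! v : ZMod n, 0 < f v := by
  have : NeZero n := ⟨by omega⟩
  refine ⟨betaB_two_eq, circDiam_two_eq, fun f hf hc => ?_⟩
  exact hf.existsUnique_pos_of_circCost_eq (by omega) (hc.trans betaB_two_eq)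
end

section
/- For every integer n ≥ 4, the broadcast independence number of the oriented circulant graph C⃗(n;1,3) equals ⌊n/2⌋. -/
/-!
A shortest walk in C⃗(n;1,3) consists of `x` unit steps and `y` steps of length `3` in any
order, so `d(u, u + m) ≤ m % 3 + m / 3`. Hence every eccentricity is at most `n / 2`, and a vertex
broadcasting with strength `f v > 0` is within distance `f v` of each of its next `2 f v - 1`
successors. In an independent broadcast no other broadcasting vertex lies there, so the blocks of
`2 f v` vertices following the broadcasting vertices are pairwise disjoint, and `2 · cost ≤ n`.

Conversely, strength `1` on all even-indexed vertices is independent when `n` is even. When `n` is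
odd, take strength `1` on `v_0, v_2, …, v_{n-7}` and strength `2` on `v_{n-5}`: the next
broadcasting vertex after `v_{n-5}` is `v_0`, at offset `5`, which is not reachable in two steps.
-/

open Finset

section General

variable {n : ℕ} {a : ℤ}

theorem circSteps_iff {u v : ZMod n} {k : ℕ} :
    circSteps n a u v k ↔ ∃ x y : ℕ, x + y = k ∧ v = u + x + a * y := by
  constructor
  · induction k generalizing v with
    | zero =>
      rintro ⟨g, rfl, rfl, -⟩
      exact ⟨0, 0, rfl, by simp⟩
    | succ k ih =>
      rintro ⟨g, hg0, rfl, harc⟩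
      obtain ⟨x, y, rfl, hgk⟩ := ih ⟨g, hg0, rfl, fun i hi => harc i (by omega)⟩
      rcases harc (x + y) (by omega) with h | h
      · exact ⟨x + 1, y, by omega, by rw [h, hgk]; push_cast; ring⟩
      · exact ⟨x, y + 1, by omega, by rw [h, hgk]; push_cast; ring⟩
  · rintro ⟨x, y, rfl, rfl⟩
    -- first x unit steps, then y steps of length a
    refine ⟨fun i => u + (min i x : ℕ) + a * ((i - x : ℕ) : ZMod n), by simp, by simp, ?_⟩
    intro i _
    by_cases h : i < x
    · left
      simp only [min_eq_left h.le, min_eq_left (Nat.succ_le_of_lt h), Nat.sub_eq_zero_of_le h.le,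
        Nat.sub_eq_zero_of_le (Nat.succ_le_of_lt h)]
      push_cast
      ring
    · right
      simp only [min_eq_right (not_lt.1 h), min_eq_right (by omega : x ≤ i + 1),
        (by omega : i + 1 - x = i - x + 1)]
      push_cast
      ring

theorem circDist_le {u v : ZMod n} {x y : ℕ} (h : v = u + x + a * y) :
    circDist n a u v ≤ x + y :=
  Nat.sInf_le (circSteps_iff.2 ⟨x, y, rfl, h⟩)

variable [NeZero n]

theorem exists_eq_circDist (u v : ZMod n) :
    ∃ x y : ℕ, x + y = circDist n a u v ∧ v = u + x + a * y :=
  circSteps_iff.1 <| Nat.sInf_mem (s := {k | circSteps n a u v k})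
    ⟨(v - u).val, circSteps_iff.2 ⟨(v - u).val, 0, rfl, by rw [ZMod.natCast_zmod_val]; ring⟩⟩

theorem circDist_le_val_sub (u v : ZMod n) : circDist n a u v ≤ (v - u).val := by
  simpa using circDist_le (a := a) (x := (v - u).val) (y := 0)
    (by rw [ZMod.natCast_zmod_val]; ring)

theorem circDist_le_circEcc (u v : ZMod n) : circDist n a u v ≤ circEcc n a u := by
  refine le_csSup ⟨n, ?_⟩ ⟨v, rfl⟩
  rintro _ ⟨w, rfl⟩
  exact (circDist_le_val_sub u w).trans (ZMod.val_lt _).le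

end General

theorem ZMod.val_sub_add_val_eq_or {n : ℕ} [NeZero n] (u v : ZMod n) :
    (v - u).val + u.val = v.val ∨ (v - u).val + u.val = v.val + n := by
  rcases lt_or_ge ((v - u).val + u.val) n with h | h
  · left; rw [← ZMod.val_add_of_lt h, sub_add_cancel]
  · right; rw [ZMod.val_add_val_of_le h, sub_add_cancel]

theorem ZMod.natCast_injOn_range {n : ℕ} : Set.InjOn (Nat.cast : ℕ → ZMod n) (range n) := by
  intro i hi j hj h
  rwa [ZMod.natCast_eq_natCast_iff', Nat.mod_eq_of_lt (mem_range.1 hi),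
    Nat.mod_eq_of_lt (mem_range.1 hj)] at h

theorem card_filter_range_mod_two_eq_zero (N : ℕ) :
    #{i ∈ range N | i % 2 = 0} = (N + 1) / 2 := by
  induction N with
  | zero => rfl
  | succ N ih =>
    rw [range_add_one, filter_insert]
    split_ifs
    · rw [card_insert_of_notMem (by simp), ih]; omega
    · rw [ih]; omega

section Broadcast

variable {n : ℕ}

theorem circCost_comp_val (g : ℕ → ℕ) :
    circCost n (fun v => g v.val) = ∑ i ∈ range n, g i :=
  sum_congr rfl fun _ hi => congrArg g (ZMod.val_cast_of_lt (mem_range.1 hi))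

def broadcastBlock (f : ZMod n → ℕ) (v : ZMod n) : Finset (ZMod n) :=
  (range (2 * f v)).image fun t : ℕ => v + 1 + (t : ZMod n)

theorem card_broadcastBlock {f : ZMod n → ℕ} {v : ZMod n} (hv : 2 * f v ≤ n) :
    (broadcastBlock f v).card = 2 * f v := by
  rw [broadcastBlock, card_image_of_injOn, card_range]
  intro t ht s hs h
  simp only [coe_range, Set.mem_Iio] at ht hs
  exact ZMod.natCast_injOn_range (by simp; omega) (by simp; omega) (add_left_cancel h)

end Broadcast

section Three

variable {n : ℕ}

theorem circDist_three_le {u v : ZMod n} {m : ℕ} (h : v = u + m) :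
    circDist n 3 u v ≤ m % 3 + m / 3 := by
  refine circDist_le ?_
  conv_lhs => rw [h, ← Nat.mod_add_div m 3]
  push_cast
  ring

theorem lt_circDist_three [NeZero n] {u v : ZMod n} {k : ℕ} (hk : 3 * k < n)
    (h : ∀ x y : ℕ, x + y ≤ k → x + 3 * y ≠ (v - u).val) : k < circDist n 3 u v := by
  obtain ⟨x, y, hxy, hv⟩ := exists_eq_circDist (a := 3) u v
  by_contra! hle
  refine h x y (by omega) ?_
  have hsub : v - u = ((x + 3 * y : ℕ) : ZMod n) := by rw [hv]; push_cast; ring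
  rw [hsub, ZMod.val_cast_of_lt (by omega)]

theorem lt_circDist_three_of_val [NeZero n] {u v : ZMod n} {k : ℕ} (hk : 3 * k < n)
    (h : ∀ x y : ℕ, x + y ≤ k → u.val + x + 3 * y ≠ v.val ∧ u.val + x + 3 * y ≠ v.val + n) :
    k < circDist n 3 u v := by
  refine lt_circDist_three hk fun x y hxy hm => ?_
  have := h x y hxy
  rcases ZMod.val_sub_add_val_eq_or u v with h' | h' <;> omega

theorem circEcc_three_le_half (hn : 4 ≤ n) (u : ZMod n) : circEcc n 3 u ≤ n / 2 := by
  have : NeZero n := ⟨by omega⟩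
  refine csSup_le ⟨_, u, rfl⟩ ?_
  rintro _ ⟨v, rfl⟩
  have := ZMod.val_lt (v - u)
  have := circDist_three_le (u := u) (v := v) (m := (v - u).val)
    (by rw [ZMod.natCast_zmod_val]; ring)
  omega

theorem two_le_circEcc_three (hn : 4 ≤ n) (u : ZMod n) : 2 ≤ circEcc n 3 u := by
  have : NeZero n := ⟨by omega⟩
  have hval : (u + 2 - u).val = 2 := by
    rw [add_sub_cancel_left, ZMod.val_ofNat_of_lt (by show 2 < n; omega)]
  refine le_trans ?_ (circDist_le_circEcc u (u + 2))
  exact lt_circDist_three (by omega) fun x y hxy => by omega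

theorem add_ne_add_of_isIndepBroadcast {f : ZMod n → ℕ} (hf : IsIndepBroadcast n 3 f)
    {u v : ZMod n} (huv : u ≠ v) {t s : ℕ} (hts : t < s) (ht : t < 2 * f u) (hs : s < 2 * f v) :
    u + 1 + (t : ZMod n) ≠ v + 1 + (s : ZMod n) := by
  intro h
  have hu : u = v + ((s - t : ℕ) : ZMod n) := by
    push_cast [Nat.cast_sub hts.le] at h ⊢
    linear_combination h
  have hdist := circDist_three_le hu
  have hind := hf.2 v u huv.symm (by omega) (by omega)
  omega

theorem disjoint_broadcastBlock {f : ZMod n → ℕ} (hf : IsIndepBroadcast n 3 f)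
    {u v : ZMod n} (huv : u ≠ v) : Disjoint (broadcastBlock f u) (broadcastBlock f v) := by
  rw [disjoint_left]
  intro w hwu hwv
  simp only [broadcastBlock, mem_image, mem_range] at hwu hwv
  obtain ⟨t, ht, rfl⟩ := hwu
  obtain ⟨s, hs, hst⟩ := hwv
  rcases lt_trichotomy t s with hlt | rfl | hgt
  · exact add_ne_add_of_isIndepBroadcast hf huv hlt ht hs hst.symm
  · exact huv (by simpa using hst.symm)
  · exact add_ne_add_of_isIndepBroadcast hf huv.symm hgt hs ht hst

theorem circCost_le_half (hn : 4 ≤ n) {f : ZMod n → ℕ} (hf : IsIndepBroadcast n 3 f) :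
    circCost n f ≤ n / 2 := by
  have : NeZero n := ⟨by omega⟩
  have hblock : ∀ v, 2 * f v ≤ n := fun v => by
    have := (hf.1 v).trans (circEcc_three_le_half hn v)
    omega
  have hdisj : (range n : Set ℕ).PairwiseDisjoint fun i => broadcastBlock f (i : ZMod n) :=
    fun i hi j hj hij => disjoint_broadcastBlock hf (ZMod.natCast_injOn_range.ne hi hj hij)
  have : 2 * circCost n f ≤ n :=
    calc 2 * circCost n f = ∑ i ∈ range n, (broadcastBlock f (i : ZMod n)).card := by
          rw [circCost, mul_sum]
          exact sum_congr rfl fun i _ => (card_broadcastBlock (hblock _)).symm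
      _ = ((range n).biUnion fun i => broadcastBlock f (i : ZMod n)).card :=
          (card_biUnion hdisj).symm
      _ ≤ n := (card_le_univ _).trans (ZMod.card n).le
  omega

def evenBroadcast (n : ℕ) (v : ZMod n) : ℕ :=
  if v.val % 2 = 0 then 1 else 0

def oddBroadcast (n : ℕ) (v : ZMod n) : ℕ :=
  (if v.val % 2 = 0 ∧ v.val + 5 ≤ n then 1 else 0) + if v.val + 5 = n then 1 else 0

theorem isIndepBroadcast_evenBroadcast (hn : 4 ≤ n) (he : n % 2 = 0) :
    IsIndepBroadcast n 3 (evenBroadcast n) := by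
  have : NeZero n := ⟨by omega⟩
  refine ⟨fun v => le_trans ?_ (two_le_circEcc_three hn v), fun u v huv hu hv => ?_⟩
  · unfold evenBroadcast; split_ifs <;> omega
  have := ZMod.val_lt u
  have := ZMod.val_lt v
  have := (ZMod.val_injective n).ne huv
  unfold evenBroadcast at hu hv ⊢
  split_ifs at hu hv ⊢ <;>
    exact lt_circDist_three_of_val (by omega) fun x y hxy => by omega

theorem isIndepBroadcast_oddBroadcast (hn : 5 ≤ n) (ho : n % 2 = 1) :
    IsIndepBroadcast n 3 (oddBroadcast n) := by
  have : NeZero n := ⟨by omega⟩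
  refine ⟨fun v => le_trans ?_ (two_le_circEcc_three (by omega) v), fun u v huv hu hv => ?_⟩
  · unfold oddBroadcast; split_ifs <;> omega
  have := ZMod.val_lt u
  have := ZMod.val_lt v
  have := (ZMod.val_injective n).ne huv
  unfold oddBroadcast at hu hv ⊢
  split_ifs at hu hv ⊢ <;>
    exact lt_circDist_three_of_val (by omega) fun x y hxy => by omega

theorem circCost_evenBroadcast : circCost n (evenBroadcast n) = (n + 1) / 2 := by
  refine (circCost_comp_val fun i => if i % 2 = 0 then 1 else 0).trans ?_
  rw [← card_filter, card_filter_range_mod_two_eq_zero]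

theorem circCost_oddBroadcast (hn : 5 ≤ n) : circCost n (oddBroadcast n) = (n - 1) / 2 := by
  have hfirst : {i ∈ range n | i % 2 = 0 ∧ i + 5 ≤ n} = {i ∈ range (n - 4) | i % 2 = 0} := by
    ext i; simp only [mem_filter, mem_range]; omega
  have hsecond : {i ∈ range n | i + 5 = n} = {n - 5} := by
    ext i; simp only [mem_filter, mem_range, mem_singleton]; omega
  refine (circCost_comp_val fun i =>
    (if i % 2 = 0 ∧ i + 5 ≤ n then 1 else 0) + if i + 5 = n then 1 else 0).trans ?_
  rw [sum_add_distrib, ← card_filter, ← card_filter, hfirst,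
    hsecond, card_filter_range_mod_two_eq_zero, card_singleton]
  omega

theorem exists_isIndepBroadcast_circCost_eq_half (hn : 4 ≤ n) :
    ∃ f, IsIndepBroadcast n 3 f ∧ circCost n f = n / 2 := by
  rcases Nat.mod_two_eq_zero_or_one n with he | ho
  · exact ⟨_, isIndepBroadcast_evenBroadcast hn he, by rw [circCost_evenBroadcast]; omega⟩
  · exact ⟨_, isIndepBroadcast_oddBroadcast (by omega) ho,
      by rw [circCost_oddBroadcast (by omega)]; omega⟩

end Three

theorem stmt7 (n : ℕ) (hn : 4 ≤ n) :
    betaB n 3 = n / 2 := by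
  have hgreatest : IsGreatest {c | ∃ f, IsIndepBroadcast n 3 f ∧ c = circCost n f} (n / 2) :=
    ⟨(exists_isIndepBroadcast_circCost_eq_half hn).imp fun _ hf => ⟨hf.1, hf.2.symm⟩,
      fun _ ⟨_, hf, hc⟩ => hc ▸ circCost_le_half hn hf⟩
  exact hgreatest.csSup_eq
end

section
/- Let n = qa with q ≥ 3 and a ≥ 4. If a = kq + 1 for some integer k ≥ 2, then the broadcast independence number of C⃗(n;1,a) equals a(q-1). If instead q = k(a-1) for some integer k ≥ 1, then the broadcast independence number of C⃗(n;1,a) equals (q+k)(a-2). -/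
/-!
Write `n = q * a` and `x = (v - u).val`. A walk from `u` with `σ` unit arcs and `τ` long arcs ends
at `u + σ + τ * a`, and minimising `σ + τ` subject to `σ + τ * a ≡ x [MOD n]` gives
`d(u, v) = x / a + x % a`; in particular every eccentricity is `q + a - 2`.

Lower bounds: since `x / a + x % a ≡ x [MOD a - 1]`, broadcasting `h - 1` from every multiple of `h`
is independent whenever `h ∣ a - 1` and `h ∣ n`; take `h = q`, resp. `h = a - 1`.

Upper bounds: let `g(u)` be the gap from a broadcasting vertex `u` to the next one. Independence
gives `f(u) < d(u, u + g(u)) ≤ g(u)` (or `f(u) ≤ q + a - 2` if `u` is alone), so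
* the arcs `u, …, u + f(u) - 1` are pairwise disjoint and cover `cost` vertices. If `y` and `y + a`
  are both covered, the offset of `y + a` in its arc exceeds that of `y`; offsets being bounded,
  each residue class mod `a` contains an uncovered vertex, whence `cost + a ≤ n`;
* `(a - 1) f(u) ≤ (a - 2) g(u)`, and the gaps sum to at most `n`, whence `(a - 1) cost ≤ (a - 2) n`.
-/

open Finset

lemma circSteps_succ {n : ℕ} {a : ℤ} {u v : ZMod n} {k : ℕ} (h : circSteps n a u v (k + 1)) :
    ∃ w, circSteps n a u w k ∧ circArc n a w v := by
  obtain ⟨g, h0, hk, hs⟩ := h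
  exact ⟨g k, ⟨g, h0, rfl, fun i hi => hs i (by omega)⟩, hk ▸ hs k (by omega)⟩

lemma exists_eq_add_of_circSteps {n a : ℕ} {u v : ZMod n} {k : ℕ} (h : circSteps n a u v k) :
    ∃ σ τ : ℕ, σ + τ = k ∧ v = u + σ + τ * a := by
  induction k generalizing v with
  | zero =>
    obtain ⟨g, h0, hk, -⟩ := h
    exact ⟨0, 0, rfl, by simp [← h0, ← hk]⟩
  | succ k ih =>
    obtain ⟨w, hw, harc⟩ := circSteps_succ h
    obtain ⟨σ, τ, rfl, rfl⟩ := ih hw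
    rcases harc with rfl | rfl
    · exact ⟨σ + 1, τ, by omega, by push_cast; ring⟩
    · exact ⟨σ, τ + 1, by omega, by push_cast; ring⟩

lemma circSteps_add_mul_add {n a : ℕ} (u : ZMod n) (t s : ℕ) :
    circSteps n a u (u + t * a + s) (t + s) := by
  refine ⟨fun i => u + (min i t : ℕ) * a + (i - t : ℕ), by simp, by simp, fun i _ => ?_⟩
  rcases lt_or_ge i t with h | h
  · right
    simp only [min_eq_left h.le, min_eq_left (Nat.succ_le_of_lt h), Nat.sub_eq_zero_of_le h.le,
      Nat.sub_eq_zero_of_le (Nat.succ_le_of_lt h)]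
    push_cast; ring
  · left
    simp only [min_eq_right h, min_eq_right (Nat.le_succ_of_le h), Nat.succ_sub h]
    push_cast; ring

lemma div_add_mod_le_self {a : ℕ} (x : ℕ) (ha : 0 < a) : x / a + x % a ≤ x := by
  have := Nat.div_add_mod x a
  have : x / a ≤ a * (x / a) := Nat.le_mul_of_pos_left _ ha
  omega

lemma div_add_mod_le_of_modEq {q a x σ τ : ℕ} (ha : 0 < a) (hx : x < q * a)
    (h : σ + τ * a ≡ x [MOD q * a]) : x / a + x % a ≤ σ + τ := by
  have hmod : σ % a = x % a := by
    simpa [Nat.ModEq] using (h.of_mul_left q : σ + τ * a ≡ x [MOD a])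
  have hdiv : (σ / a + τ) * a ≡ x / a * a [MOD q * a] := by
    have e1 : σ + τ * a = (σ / a + τ) * a + x % a := by
      rw [← hmod]; have := Nat.div_add_mod σ a; rw [add_mul]; linarith
    have e2 : x = x / a * a + x % a := (Nat.div_add_mod' x a).symm
    rw [e1] at h; conv_rhs at h => rw [e2]
    exact Nat.ModEq.add_right_cancel' _ h
  have hq : x / a ≤ σ / a + τ := by
    have h' : (σ / a + τ) % q = x / a := by
      rw [Nat.ModEq.mul_right_cancel' ha.ne' hdiv, Nat.mod_eq_of_lt ((Nat.div_lt_iff_lt_mul ha).2 hx)]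
    exact h' ▸ Nat.mod_le _ _
  have := div_add_mod_le_self σ ha
  omega

lemma circDist_eq {q a : ℕ} (hq : 0 < q) (ha : 0 < a) (u v : ZMod (q * a)) :
    circDist (q * a) a u v = (v - u).val / a + (v - u).val % a := by
  have := NeZero.of_pos (Nat.mul_pos hq ha)
  apply IsLeast.csInf_eq
  refine ⟨?_, fun k hk => ?_⟩
  · have := circSteps_add_mul_add (n := q * a) (a := a) u ((v - u).val / a) ((v - u).val % a)
    rwa [add_assoc, ← Nat.cast_mul, ← Nat.cast_add, Nat.div_add_mod', ZMod.natCast_zmod_val,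
      add_sub_cancel] at this
  · obtain ⟨σ, τ, rfl, hv⟩ := exists_eq_add_of_circSteps hk
    refine div_add_mod_le_of_modEq ha (ZMod.val_lt _) ?_
    rw [← ZMod.natCast_eq_natCast_iff, ZMod.natCast_zmod_val, hv]
    push_cast; ring

lemma circEcc_eq {q a : ℕ} (hq : 0 < q) (ha : 0 < a) (u : ZMod (q * a)) :
    circEcc (q * a) a u = q - 1 + (a - 1) := by
  have hn := Nat.mul_pos hq ha
  have := NeZero.of_pos hn
  have hlast : q * a - 1 = a * (q - 1) + (a - 1) := by
    obtain ⟨q, rfl⟩ := Nat.exists_eq_add_of_lt hq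
    obtain ⟨a, rfl⟩ := Nat.exists_eq_add_of_lt ha
    simp only [zero_add, Nat.add_sub_cancel]; ring_nf; omega
  apply IsGreatest.csSup_eq
  refine ⟨⟨u + (q * a - 1 : ℕ), ?_⟩, ?_⟩
  · rw [circDist_eq hq ha, add_sub_cancel_left, ZMod.val_natCast_of_lt (by omega), hlast,
      Nat.mul_add_div ha, Nat.mul_add_mod, Nat.div_eq_of_lt (by omega), Nat.mod_eq_of_lt (by omega)]
    omega
  · rintro d ⟨v, rfl⟩
    rw [circDist_eq hq ha]
    have h1 : (v - u).val / a < q := (Nat.div_lt_iff_lt_mul ha).2 (ZMod.val_lt _)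
    have h2 : (v - u).val % a < a := Nat.mod_lt _ ha
    omega

lemma div_add_mod_add_le {a x : ℕ} (ha : 0 < a) (hx : a ≤ x) : x / a + x % a + a ≤ x + 1 := by
  have h := Nat.div_add_mod x a
  have ht : 1 ≤ x / a := (Nat.one_le_div_iff ha).2 hx
  nlinarith

lemma mul_div_add_mod_sub_one_le {a : ℕ} (x : ℕ) (ha : 3 ≤ a) :
    (a - 1) * (x / a + x % a - 1) ≤ (a - 2) * x := by
  have h := Nat.div_add_mod x a
  have hs := Nat.mod_lt x (by omega : 0 < a)
  obtain ⟨b, rfl⟩ : ∃ b, a = b + 3 := ⟨a - 3, by omega⟩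
  rcases Nat.eq_zero_or_pos (x / (b + 3) + x % (b + 3)) with h0 | h0
  · simp [h0]
  generalize x / (b + 3) = t at *
  generalize x % (b + 3) = s at *
  subst h
  simp only [show b + 3 - 1 = b + 2 by omega, show b + 3 - 2 = b + 1 by omega]
  zify [h0]
  nlinarith [Nat.zero_le (b * b * t), Nat.zero_le (b * t)]

lemma mul_ecc_le {q a : ℕ} (hq : 2 ≤ q) (ha : 3 ≤ a) :
    (a - 1) * (q - 1 + (a - 1)) ≤ (a - 2) * (q * a) := by
  obtain ⟨b, rfl⟩ : ∃ b, a = b + 3 := ⟨a - 3, by omega⟩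
  obtain ⟨c, rfl⟩ : ∃ c, q = c + 2 := ⟨q - 2, by omega⟩
  simp only [show b + 3 - 1 = b + 2 by omega, show b + 3 - 2 = b + 1 by omega,
    show c + 2 - 1 = c + 1 by omega]
  nlinarith [Nat.zero_le (b * b * c), Nat.zero_le (b * c), Nat.zero_le (b * b)]

lemma circCost_eq_sum_pos {n : ℕ} [NeZero n] (f : ZMod n → ℕ) :
    circCost n f = ∑ u with 0 < f u, f u := by
  rw [sum_filter_of_ne fun u _ h => Nat.pos_of_ne_zero h, circCost]
  exact sum_nbij' (↑) ZMod.val (fun _ _ => mem_univ _) (fun u _ => mem_range.2 u.val_lt)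
    (fun i hi => ZMod.val_cast_of_lt (mem_range.1 hi)) (fun u _ => ZMod.natCast_zmod_val u)
    (fun _ _ => rfl)

section Gaps

variable {n : ℕ}

noncomputable def nextGap (f : ZMod n → ℕ) (u : ZMod n) : ℕ :=
  sInf {g | 0 < g ∧ 0 < f (u + g)}

def arc (u : ZMod n) (m : ℕ) : Finset (ZMod n) :=
  (range m).image fun r : ℕ => u + r

lemma mem_arc {u v : ZMod n} {m : ℕ} : v ∈ arc u m ↔ ∃ r < m, u + r = v := by
  simp [arc]

lemma arc_mono (u : ZMod n) {m m' : ℕ} (h : m ≤ m') : arc u m ⊆ arc u m' :=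
  image_subset_image (range_subset_range.2 h)

lemma card_arc (u : ZMod n) {m : ℕ} (hm : m ≤ n) : (arc u m).card = m := by
  rw [arc, card_image_of_injOn, card_range]
  intro r hr r' hr' h
  have := congrArg ZMod.val (add_left_cancel h)
  rwa [ZMod.val_natCast_of_lt (by simp at hr; omega),
    ZMod.val_natCast_of_lt (by simp at hr'; omega)] at this

variable {f : ZMod n → ℕ} {u : ZMod n}

lemma eq_zero_of_lt_nextGap {g : ℕ} (hg : 0 < g) (hlt : g < nextGap f u) : f (u + g) = 0 := by
  by_contra h
  exact Nat.notMem_of_lt_sInf hlt ⟨hg, Nat.pos_of_ne_zero h⟩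

lemma eq_of_add_eq_add_of_lt_nextGap {v : ZMod n} {r r' : ℕ} (hv : 0 < f v)
    (hr : r < nextGap f u) (hr' : r' ≤ r) (h : u + r = v + r') : u = v := by
  have hv' : v = u + ((r - r' : ℕ) : ZMod n) := by
    rw [Nat.cast_sub hr', ← add_sub_assoc, h, add_sub_cancel_right]
  rcases Nat.eq_zero_or_pos (r - r') with h0 | h0
  · rw [hv', h0, Nat.cast_zero, add_zero]
  · exact absurd (eq_zero_of_lt_nextGap h0 (by omega)) (hv' ▸ hv).ne'

variable [NeZero n]

lemma nextGap_pos_and (hu : 0 < f u) : 0 < nextGap f u ∧ 0 < f (u + nextGap f u) :=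
  Nat.sInf_mem (s := {g | 0 < g ∧ 0 < f (u + g)}) ⟨n, NeZero.pos n, by simpa using hu⟩

lemma nextGap_le (hu : 0 < f u) : nextGap f u ≤ n :=
  Nat.sInf_le ⟨NeZero.pos n, by simpa using hu⟩

lemma pairwiseDisjoint_arc_nextGap :
    (({u | 0 < f u} : Finset (ZMod n)) : Set (ZMod n)).PairwiseDisjoint
      fun u => arc u (nextGap f u) := by
  intro u hu v hv huv
  simp only [coe_filter, mem_univ, true_and, Set.mem_ofPred_eq] at hu hv
  refine disjoint_left.2 fun y hyu hyv => huv ?_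
  obtain ⟨r, hr, rfl⟩ := mem_arc.1 hyu
  obtain ⟨r', hr', h⟩ := mem_arc.1 hyv
  rcases le_total r' r with hle | hle
  · exact eq_of_add_eq_add_of_lt_nextGap hv hr hle h.symm
  · exact (eq_of_add_eq_add_of_lt_nextGap hu hr' hle h).symm

lemma sum_nextGap_le : ∑ u with 0 < f u, nextGap f u ≤ n := by
  calc ∑ u with 0 < f u, nextGap f u
      = ∑ u with 0 < f u, (arc u (nextGap f u)).card :=
        sum_congr rfl fun u hu => (card_arc u (nextGap_le (mem_filter.1 hu).2)).symm
    _ = (({u | 0 < f u} : Finset (ZMod n)).biUnion fun u => arc u (nextGap f u)).card :=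
        (card_biUnion pairwiseDisjoint_arc_nextGap).symm
    _ ≤ n := (card_le_univ _).trans_eq (ZMod.card n)

def arcCover (f : ZMod n → ℕ) : Finset (ZMod n) :=
  ({u | 0 < f u} : Finset (ZMod n)).biUnion fun u => arc u (f u)

lemma mem_arcCover {y : ZMod n} : y ∈ arcCover f ↔ ∃ u, 0 < f u ∧ ∃ r < f u, u + r = y := by
  simp [arcCover, mem_arc]

lemma card_arcCover (h : ∀ u, 0 < f u → f u < nextGap f u) :
    (arcCover f).card = circCost n f := by
  rw [arcCover, card_biUnion (pairwiseDisjoint_arc_nextGap.mono_on fun u hu =>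
      arc_mono u (h u (by simpa using hu)).le), circCost_eq_sum_pos]
  exact sum_congr rfl fun u hu =>
    card_arc u ((h u (mem_filter.1 hu).2).le.trans (nextGap_le (mem_filter.1 hu).2))

end Gaps

namespace IsIndepBroadcast

variable {q a : ℕ} {f : ZMod (q * a) → ℕ} {u v : ZMod (q * a)}

lemma le_ecc (hf : IsIndepBroadcast (q * a) a f) (hq : 0 < q) (ha : 0 < a) (u : ZMod (q * a)) :
    f u ≤ q - 1 + (a - 1) :=
  (hf.1 u).trans_eq (circEcc_eq hq ha u)

lemma lt_div_add_mod (hf : IsIndepBroadcast (q * a) a f) (hq : 0 < q) (ha : 0 < a)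
    (huv : u ≠ v) (hu : 0 < f u) (hv : 0 < f v) :
    f u < (v - u).val / a + (v - u).val % a :=
  circDist_eq hq ha u v ▸ hf.2 u v huv hu hv

lemma add_le_val_sub (hf : IsIndepBroadcast (q * a) a f) (hq : 0 < q) (ha : 0 < a)
    (hu : 0 < f u) (hv : 0 < f v) (h : a ≤ (v - u).val) : a + f u ≤ (v - u).val := by
  have huv : u ≠ v := by rintro rfl; simp at h; omega
  have := hf.lt_div_add_mod hq ha huv hu hv
  have := div_add_mod_add_le ha h
  omega

lemma lt_div_add_mod_nextGap (hf : IsIndepBroadcast (q * a) a f) (hq : 0 < q) (ha : 0 < a)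
    (hu : 0 < f u) (hlt : nextGap f u < q * a) :
    f u < nextGap f u / a + nextGap f u % a := by
  have := NeZero.of_pos (Nat.mul_pos hq ha)
  obtain ⟨hg, hv⟩ := nextGap_pos_and hu
  have hval : (u + nextGap f u - u).val = nextGap f u := by
    rw [add_sub_cancel_left, ZMod.val_natCast_of_lt hlt]
  have huv : u ≠ u + nextGap f u := by
    intro h
    rw [← h, sub_self, ZMod.val_zero] at hval
    omega
  have := hf.lt_div_add_mod hq ha huv hu hv
  rwa [hval] at this

lemma lt_nextGap (hf : IsIndepBroadcast (q * a) a f) (hq : 2 ≤ q) (ha : 2 ≤ a)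
    (hu : 0 < f u) : f u < nextGap f u := by
  have := NeZero.of_pos (Nat.mul_pos (by omega : 0 < q) (by omega : 0 < a))
  rcases (nextGap_le hu).lt_or_eq with hlt | heq
  · exact (hf.lt_div_add_mod_nextGap (by omega) (by omega) hu hlt).trans_le
      (div_add_mod_le_self _ (by omega))
  · have := hf.le_ecc (by omega) (by omega) u
    have : q + a ≤ q * a := by nlinarith
    omega

lemma mul_le_mul_nextGap (hf : IsIndepBroadcast (q * a) a f) (hq : 2 ≤ q) (ha : 3 ≤ a)
    (hu : 0 < f u) : (a - 1) * f u ≤ (a - 2) * nextGap f u := by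
  have := NeZero.of_pos (Nat.mul_pos (by omega : 0 < q) (by omega : 0 < a))
  rcases (nextGap_le hu).lt_or_eq with hlt | heq
  · have := hf.lt_div_add_mod_nextGap (by omega) (by omega) hu hlt
    calc (a - 1) * f u ≤ (a - 1) * (nextGap f u / a + nextGap f u % a - 1) :=
          Nat.mul_le_mul_left _ (by omega)
      _ ≤ (a - 2) * nextGap f u := mul_div_add_mod_sub_one_le _ ha
  · calc (a - 1) * f u ≤ (a - 1) * (q - 1 + (a - 1)) :=
          Nat.mul_le_mul_left _ (hf.le_ecc (by omega) (by omega) u)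
      _ ≤ (a - 2) * nextGap f u := by rw [heq]; exact mul_ecc_le hq ha

theorem mul_circCost_le (hf : IsIndepBroadcast (q * a) a f) (hq : 2 ≤ q) (ha : 3 ≤ a) :
    (a - 1) * circCost (q * a) f ≤ (a - 2) * (q * a) := by
  have := NeZero.of_pos (Nat.mul_pos (by omega : 0 < q) (by omega : 0 < a))
  calc (a - 1) * circCost (q * a) f = ∑ u with 0 < f u, (a - 1) * f u := by
        rw [circCost_eq_sum_pos, mul_sum]
    _ ≤ ∑ u with 0 < f u, (a - 2) * nextGap f u :=
        sum_le_sum fun u hu => hf.mul_le_mul_nextGap hq ha (mem_filter.1 hu).2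
    _ ≤ (a - 2) * (q * a) := by
        rw [← mul_sum]
        exact Nat.mul_le_mul_left _ sum_nextGap_le

lemma lt_of_add_add_eq (hf : IsIndepBroadcast (q * a) a f) (hq : 2 ≤ q) (ha : 2 ≤ a)
    (hu : 0 < f u) (hv : 0 < f v) {r r' : ℕ} (hr : r < f u) (h : u + r + a = v + r') :
    r < r' := by
  by_contra! hle
  have hlt : a + (r - r') < q * a := by
    have := hf.le_ecc (by omega) (by omega) u
    have : 2 * a + q ≤ q * a + 2 := by nlinarith
    omega
  have hval : (v - u).val = a + (r - r') := by
    rw [← ZMod.val_natCast_of_lt hlt, Nat.cast_add, Nat.cast_sub hle, eq_sub_of_add_eq h.symm]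
    ring_nf
  have := hf.add_le_val_sub (by omega) (by omega) hu hv (hval ▸ Nat.le_add_right _ _)
  omega

lemma exists_add_mul_uncovered (hf : IsIndepBroadcast (q * a) a f) (hq : 2 ≤ q) (ha : 2 ≤ a)
    (x : ZMod (q * a)) : ∃ l : ℕ, ¬∃ u, 0 < f u ∧ ∃ r < f u, u + r = x + (l * a : ℕ) := by
  by_contra! hcov
  have hoffset : ∀ l : ℕ, ∃ u, 0 < f u ∧ ∃ r < f u, l ≤ r ∧ u + r = x + (l * a : ℕ) := by
    intro l
    induction l with
    | zero =>
      obtain ⟨u, hu, r, hr, h⟩ := hcov 0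
      exact ⟨u, hu, r, hr, r.zero_le, h⟩
    | succ l ih =>
      obtain ⟨u, hu, r, hr, hlr, h⟩ := ih
      obtain ⟨v, hv, r', hr', h'⟩ := hcov (l + 1)
      refine ⟨v, hv, r', hr', ?_, h'⟩
      have := hf.lt_of_add_add_eq hq ha hu hv hr (by rw [h, h']; push_cast; ring)
      omega
  obtain ⟨u, -, r, hr, hlr, -⟩ := hoffset (q - 1 + (a - 1))
  have := hf.le_ecc (by omega) (by omega) u
  omega

theorem circCost_add_le (hf : IsIndepBroadcast (q * a) a f) (hq : 2 ≤ q) (ha : 2 ≤ a) :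
    circCost (q * a) f + a ≤ q * a := by
  have := NeZero.of_pos (Nat.mul_pos (by omega : 0 < q) (by omega : 0 < a))
  have hfree : a ≤ (arcCover f)ᶜ.card := by
    calc a = (range a).card := (card_range a).symm
      _ ≤ (arcCover f)ᶜ.card := card_le_card_of_surjOn (fun y : ZMod (q * a) => y.val % a) ?_
    intro ρ hρ
    obtain ⟨l, hl⟩ := hf.exists_add_mul_uncovered hq ha ρ
    refine ⟨_, mem_compl.2 (mem_arcCover.not.2 hl), ?_⟩
    show ((ρ : ZMod (q * a)) + (l * a : ℕ)).val % a = ρ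
    rw [← Nat.cast_add, ZMod.val_natCast, Nat.mod_mod_of_dvd _ (dvd_mul_left a q),
      Nat.add_mul_mod_self_right, Nat.mod_eq_of_lt (mem_range.1 hρ)]
  have hcover := card_arcCover (f := f) fun u hu => hf.lt_nextGap hq ha hu
  have := card_compl_add_card (arcCover f)
  rw [ZMod.card] at this
  omega

end IsIndepBroadcast

lemma div_add_mod_modEq (x : ℕ) {a : ℕ} (ha : 0 < a) : x / a + x % a ≡ x [MOD a - 1] := by
  have h1 : 1 ≡ a [MOD a - 1] := (Nat.modEq_iff_dvd' ha).2 dvd_rfl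
  calc x / a + x % a = 1 * (x / a) + x % a := by rw [one_mul]
    _ ≡ a * (x / a) + x % a [MOD a - 1] := (h1.mul_right _).add_right _
    _ = x := Nat.div_add_mod x a

lemma div_add_mod_pos {a x : ℕ} (hx : 0 < x) : 0 < x / a + x % a := by
  refine Nat.pos_of_ne_zero fun h0 => hx.ne' ?_
  obtain ⟨h1, h2⟩ := Nat.add_eq_zero_iff.1 h0
  rw [← Nat.div_add_mod x a, h1, h2, mul_zero]

lemma dvd_val_sub {n h : ℕ} [NeZero n] (hhn : h ∣ n) {u v : ZMod n} (hu : h ∣ u.val)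
    (hv : h ∣ v.val) : h ∣ (v - u).val := by
  rw [← ZMod.natCast_eq_zero_iff, ZMod.natCast_val] at hu hv ⊢
  rw [ZMod.cast_sub hhn, hu, hv, sub_zero]

lemma sum_range_mul_ite_dvd (c : ℕ) {h : ℕ} (hh : 0 < h) (m : ℕ) :
    ∑ i ∈ range (m * h), (if h ∣ i then c else 0) = m * c := by
  induction m with
  | zero => simp
  | succ m ih =>
    rw [add_mul, one_mul, sum_range_add, ih, sum_eq_single_of_mem 0 (mem_range.2 hh)]
    · simp [add_mul]
    · intro j hj hj0
      rw [if_neg ((Nat.dvd_add_right (dvd_mul_left h m)).not.2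
        (Nat.not_dvd_of_pos_of_lt (Nat.pos_of_ne_zero hj0) (mem_range.1 hj)))]

def multiplesBroadcast (n h : ℕ) (x : ZMod n) : ℕ :=
  if h ∣ x.val then h - 1 else 0

lemma isIndepBroadcast_multiplesBroadcast {q a h : ℕ} (hq : 0 < q) (ha : 2 ≤ a)
    (hha : h ∣ a - 1) (hhn : h ∣ q * a) :
    IsIndepBroadcast (q * a) a (multiplesBroadcast (q * a) h) := by
  have := NeZero.of_pos (Nat.mul_pos hq (by omega : 0 < a))
  have hle : h ≤ a - 1 := Nat.le_of_dvd (by omega) hha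
  refine ⟨fun v => ?_, fun u v huv hu hv => ?_⟩
  · rw [circEcc_eq hq (by omega), multiplesBroadcast]
    split_ifs <;> omega
  · have hdu : h ∣ u.val := by by_contra hc; simp [multiplesBroadcast, hc] at hu
    have hdv : h ∣ v.val := by by_contra hc; simp [multiplesBroadcast, hc] at hv
    have hpos : 0 < (v - u).val := ZMod.val_pos.2 (sub_ne_zero.2 huv.symm)
    have hdist : h ∣ (v - u).val / a + (v - u).val % a :=
      (Nat.modEq_zero_iff_dvd.1
        (((div_add_mod_modEq _ (by omega)).of_dvd hha).trans
          (Nat.modEq_zero_iff_dvd.2 (dvd_val_sub hhn hdu hdv))))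
    rw [circDist_eq hq (by omega), multiplesBroadcast, if_pos hdu]
    have hdpos := div_add_mod_pos (a := a) hpos
    have := Nat.le_of_dvd hdpos hdist
    omega

lemma circCost_multiplesBroadcast {n h : ℕ} (hh : 0 < h) (hhn : h ∣ n) :
    circCost n (multiplesBroadcast n h) = (h - 1) * (n / h) := by
  obtain ⟨m, rfl⟩ := hhn
  rw [circCost, sum_congr rfl fun i hi => by
    rw [multiplesBroadcast, ZMod.val_cast_of_lt (mem_range.1 hi)], mul_comm h m,
    sum_range_mul_ite_dvd _ hh, Nat.mul_div_cancel _ hh, mul_comm]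

lemma betaB_eq_of_forall_le {n : ℕ} {a : ℤ} {g : ZMod n → ℕ} {c : ℕ}
    (hg : IsIndepBroadcast n a g) (hc : circCost n g = c)
    (hle : ∀ f, IsIndepBroadcast n a f → circCost n f ≤ c) : betaB n a = c :=
  IsGreatest.csSup_eq ⟨⟨g, hg, hc.symm⟩, by rintro _ ⟨f, hf, rfl⟩; exact hle f hf⟩

theorem stmt18 (n a q : ℕ) (hn : n = q * a) (hq : 3 ≤ q) (ha : 4 ≤ a) :
    (∀ k : ℕ, 2 ≤ k → a = k * q + 1 → betaB n (a : ℤ) = a * (q - 1)) ∧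
    (∀ k : ℕ, 1 ≤ k → q = k * (a - 1) → betaB n (a : ℤ) = (q + k) * (a - 2)) := by
  subst hn
  refine ⟨fun k _ hak => ?_, fun k hk hqk => ?_⟩
  · refine betaB_eq_of_forall_le (isIndepBroadcast_multiplesBroadcast (h := q) (by omega)
      (by omega) ⟨k, by rw [hak]; ring_nf; omega⟩ (dvd_mul_right q a)) ?_ fun f hf => ?_
    · rw [circCost_multiplesBroadcast (by omega) (dvd_mul_right q a),
        Nat.mul_div_cancel_left _ (by omega), mul_comm]
    · have := hf.circCost_add_le (by omega) (by omega)
      rw [Nat.mul_sub_one, mul_comm a q]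
      omega
  · have hqa : q * a = (a - 1) * (k * a) := by rw [hqk]; ring
    have hka : q + k = k * a := by
      rw [hqk]
      obtain ⟨b, rfl⟩ : ∃ b, a = b + 1 := ⟨a - 1, by omega⟩
      simp only [Nat.add_sub_cancel]; ring
    refine betaB_eq_of_forall_le (isIndepBroadcast_multiplesBroadcast (h := a - 1) (by omega)
      (by omega) dvd_rfl (hqa ▸ dvd_mul_right _ _)) ?_ fun f hf => ?_
    · rw [circCost_multiplesBroadcast (by omega) (hqa ▸ dvd_mul_right _ _), hqa,
        Nat.mul_div_cancel_left _ (by omega), hka, Nat.sub_sub, mul_comm]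
    · have := hf.mul_circCost_le (by omega) (by omega)
      rw [show (a - 2) * (q * a) = (a - 1) * ((q + k) * (a - 2)) by rw [hqa, hka]; ring] at this
      exact Nat.le_of_mul_le_mul_left this (by omega)
end
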